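/- arXiv:2206.07279 — 2 statements merged into one kernel-verified Lean document; each statement's English description precedes it below -/
import Mathlib

section
/- Let 0 < α ≤ β and let Σ be a symmetric d×d real matrix with αI ⪯ Σ ⪯ βI. Let θ, θ* ∈ ℝ^d and let r ∈ ℝ^d be a unit vector satisfying ⟨r, Σ(θ* − θ)⟩ ≥ 0 and ⟨r, Σ(θ* − θ)⟩² ≥ (1 − α²/(64β²))‖Σ(θ* − θ)‖². Let σ̂ ≥ 0 satisfy (1 − α²/(32β²))‖Σ(θ* − θ)‖² ≤ σ̂² ≤ (1 + α²/(32β²))‖Σ(θ* − θ)‖². Define θ' = θ + (ασ̂/(2β²)) r. Then ‖Σ(θ* − θ')‖² ≤ (1 − α²/(8β²)) ‖Σ(θ* − θ)‖². -/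
open Matrix

/-- The Euclidean norm of a vector in `ℝ^d`. -/
noncomputable def enorm {ι : Type*} [Fintype ι] (v : ι → ℝ) : ℝ :=
  Real.sqrt (∑ i, v i ^ 2)

lemma enorm_sq_eq_dot {ι : Type*} [Fintype ι] (v : ι → ℝ) :
    _root_.enorm v ^ 2 = v ⬝ᵥ v := by
  rw [_root_.enorm, Real.sq_sqrt (Finset.sum_nonneg fun i _ => sq_nonneg _)]
  simp [dotProduct, sq]

lemma dot_self_nonneg' {ι : Type*} [Fintype ι] (v : ι → ℝ) : 0 ≤ v ⬝ᵥ v :=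
  Finset.sum_nonneg fun i _ => mul_self_nonneg _

lemma le_of_sq_le_sq' (a b : ℝ) (hb : 0 ≤ b) (h : a ^ 2 ≤ b ^ 2) : a ≤ b := by
  nlinarith [sq_nonneg (a - b), sq_nonneg (a + b)]

lemma dot_CS {ι : Type*} [Fintype ι] (x y : ι → ℝ) :
    (x ⬝ᵥ y) ^ 2 ≤ (x ⬝ᵥ x) * (y ⬝ᵥ y) := by
  have := Finset.sum_mul_sq_le_sq_mul_sq Finset.univ x y
  simpa [dotProduct, sq] using this

set_option maxHeartbeats 1600000 in
/-- one step of moment descent contracts the residual error. -/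
theorem stmt1 (d : ℕ) (α β : ℝ) (hα : 0 < α) (hαβ : α ≤ β)
    (Sig : Matrix (Fin d) (Fin d) ℝ) (hsymm : Sigᵀ = Sig)
    (hlow : (Sig - α • (1 : Matrix (Fin d) (Fin d) ℝ)).PosSemidef)
    (hup : ((β • (1 : Matrix (Fin d) (Fin d) ℝ)) - Sig).PosSemidef)
    (θ θs r : Fin d → ℝ) (hr : _root_.enorm r = 1)
    (hpos : 0 ≤ r ⬝ᵥ Sig.mulVec (θs - θ))
    (halign : (r ⬝ᵥ Sig.mulVec (θs - θ)) ^ 2 ≥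
      (1 - α ^ 2 / (64 * β ^ 2)) * _root_.enorm (Sig.mulVec (θs - θ)) ^ 2)
    (σh : ℝ) (hσh : 0 ≤ σh)
    (hσlow : (1 - α ^ 2 / (32 * β ^ 2)) * _root_.enorm (Sig.mulVec (θs - θ)) ^ 2 ≤ σh ^ 2)
    (hσup : σh ^ 2 ≤ (1 + α ^ 2 / (32 * β ^ 2)) * _root_.enorm (Sig.mulVec (θs - θ)) ^ 2) :
    _root_.enorm (Sig.mulVec (θs - (θ + (α * σh / (2 * β ^ 2)) • r))) ^ 2 ≤
      (1 - α ^ 2 / (8 * β ^ 2)) * _root_.enorm (Sig.mulVec (θs - θ)) ^ 2 := by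
  have hβ : 0 < β := lt_of_lt_of_le hα hαβ
  have hβ2 : (0:ℝ) < β ^ 2 := by positivity
  have hα2β2 : α ^ 2 ≤ β ^ 2 := by nlinarith
  -- quadratic form bounds
  have hSlow : ∀ x : Fin d → ℝ, α * (x ⬝ᵥ x) ≤ x ⬝ᵥ Sig.mulVec x := by
    intro x
    have h := hlow.dotProduct_mulVec_nonneg x
    simp only [star_trivial, sub_mulVec, smul_mulVec, one_mulVec, dotProduct_sub,
      dotProduct_smul, smul_eq_mul] at h
    linarith
  have hSup : ∀ x : Fin d → ℝ, x ⬝ᵥ Sig.mulVec x ≤ β * (x ⬝ᵥ x) := by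
    intro x
    have h := hup.dotProduct_mulVec_nonneg x
    simp only [star_trivial, sub_mulVec, smul_mulVec, one_mulVec, dotProduct_sub,
      dotProduct_smul, smul_eq_mul] at h
    linarith
  have hSpos : ∀ x : Fin d → ℝ, 0 ≤ x ⬝ᵥ Sig.mulVec x := fun x =>
    le_trans (mul_nonneg hα.le (dot_self_nonneg' x)) (hSlow x)
  -- symmetry of the form
  have hsym : ∀ x y : Fin d → ℝ, x ⬝ᵥ Sig.mulVec y = y ⬝ᵥ Sig.mulVec x := by
    intro x y
    rw [dotProduct_mulVec, ← mulVec_transpose, hsymm, dotProduct_comm]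
  -- Cauchy-Schwarz for the PSD form
  have hCSS : ∀ x y : Fin d → ℝ,
      (x ⬝ᵥ Sig.mulVec y) ^ 2 ≤ (x ⬝ᵥ Sig.mulVec x) * (y ⬝ᵥ Sig.mulVec y) := by
    intro x y
    have hq : ∀ t : ℝ,
        0 ≤ (y ⬝ᵥ Sig.mulVec y) * (t * t) + (2 * (x ⬝ᵥ Sig.mulVec y)) * t
          + (x ⬝ᵥ Sig.mulVec x) := by
      intro t
      have h := hSpos (x + t • y)
      simp only [mulVec_add, mulVec_smul, dotProduct_add, add_dotProduct, dotProduct_smul,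
        smul_dotProduct, smul_eq_mul] at h
      rw [hsym y x] at h
      ring_nf at h ⊢
      linarith
    have hd := discrim_le_zero hq
    rw [discrim] at hd
    nlinarith [hd, sq_nonneg (x ⬝ᵥ Sig.mulVec y)]
  -- operator norm bound
  have hop : ∀ x : Fin d → ℝ, (Sig.mulVec x) ⬝ᵥ (Sig.mulVec x) ≤ β ^ 2 * (x ⬝ᵥ x) := by
    intro x
    set y := Sig.mulVec x with hy
    have h1 : (y ⬝ᵥ Sig.mulVec x) ^ 2 ≤ (y ⬝ᵥ Sig.mulVec y) * (x ⬝ᵥ Sig.mulVec x) := hCSS y x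
    have h2 : y ⬝ᵥ Sig.mulVec x = y ⬝ᵥ y := rfl
    rw [h2] at h1
    have h3 := hSup y
    have h4 := hSup x
    have h5 := dot_self_nonneg' y
    have h6 := dot_self_nonneg' x
    rcases eq_or_lt_of_le h5 with h | h
    · rw [← h]; positivity
    · have h7 : (y ⬝ᵥ Sig.mulVec y) * (x ⬝ᵥ Sig.mulVec x) ≤ (β * (y ⬝ᵥ y)) * (β * (x ⬝ᵥ x)) :=
        mul_le_mul h3 h4 (hSpos x) (mul_nonneg hβ.le h5)
      have h8 : (y ⬝ᵥ y) * (y ⬝ᵥ y) ≤ (y ⬝ᵥ y) * (β ^ 2 * (x ⬝ᵥ x)) := by nlinarith [h1, h7]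
      exact le_of_mul_le_mul_left h8 h
  -- notation
  set v : Fin d → ℝ := Sig.mulVec (θs - θ) with hv
  set u : Fin d → ℝ := Sig.mulVec r with hu
  set η : ℝ := α * σh / (2 * β ^ 2) with hη
  set n2 : ℝ := v ⬝ᵥ v with hn2
  set c : ℝ := r ⬝ᵥ v with hc
  set s : ℝ := v ⬝ᵥ u with hs
  have hn2nn : 0 ≤ n2 := dot_self_nonneg' v
  have henv : _root_.enorm v ^ 2 = n2 := enorm_sq_eq_dot v
  rw [henv] at hσlow hσup halign
  have hrr : r ⬝ᵥ r = 1 := by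
    have := enorm_sq_eq_dot r
    rw [hr] at this; simpa using this.symm
  -- rewrite the new residual
  have hres : Sig.mulVec (θs - (θ + η • r)) = v - η • u := by
    have : θs - (θ + η • r) = (θs - θ) - η • r := by
      funext i; simp [sub_add_eq_sub_sub]
    rw [this, mulVec_sub, mulVec_smul]
  rw [hres]
  have hexp : _root_.enorm (v - η • u) ^ 2 = n2 - 2 * η * s + η ^ 2 * (u ⬝ᵥ u) := by
    rw [enorm_sq_eq_dot]
    simp only [sub_dotProduct, dotProduct_sub, smul_dotProduct, dotProduct_smul, smul_eq_mul,
      hn2, hs, dotProduct_comm u v]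
    ring
  rw [hexp, henv]
  -- key scalar facts
  set n : ℝ := _root_.enorm v with hn
  have hnn : 0 ≤ n := Real.sqrt_nonneg _
  have hnsq : n ^ 2 = n2 := henv
  have hUβ : u ⬝ᵥ u ≤ β ^ 2 := by
    have := hop r; rw [hrr] at this; simpa using this
  have hUnn : 0 ≤ u ⬝ᵥ u := dot_self_nonneg' u
  have hηnn : 0 ≤ η := by positivity
  -- σh bounds
  have hσn : (31/32) * n2 ≤ σh * n := by
    have h1 : (31/32) * n2 ≤ σh ^ 2 := by
      have : (31/32 : ℝ) * n2 ≤ (1 - α ^ 2 / (32 * β ^ 2)) * n2 := by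
        have : α ^ 2 / (32 * β ^ 2) ≤ 1/32 := by
          rw [div_le_iff₀ (by positivity)]; nlinarith
        nlinarith
      linarith [hσlow]
    have h2 : (31/32) * n ≤ σh := by
      apply le_of_sq_le_sq' _ _ hσh
      nlinarith [h1, hnsq, hn2nn]
    have h3 := mul_le_mul_of_nonneg_right h2 hnn
    nlinarith [h3, hnsq]
  have hσ2 : σh ^ 2 ≤ (33/32) * n2 := by
    have : α ^ 2 / (32 * β ^ 2) ≤ 1/32 := by
      rw [div_le_iff₀ (by positivity)]; nlinarith
    nlinarith [hσup]
  -- the cross term bound : s ≥ (3/4) α n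
  have hcross : (3/4) * α * n ≤ s := by
    rcases eq_or_lt_of_le hn2nn with h0 | h0
    · -- n2 = 0 : v = 0 hence s = 0 and n = 0
      have hv0 : v = 0 := by
        have := dotProduct_self_eq_zero.mp h0.symm
        exact this
      have hs0 : s = 0 := by rw [hs, hv0]; simp
      have hn0 : n = 0 := by
        have : n ^ 2 = 0 := by rw [hnsq, ← h0]
        exact pow_eq_zero_iff (by norm_num) |>.mp this
      rw [hs0, hn0]; ring_nf; simp
    · -- main case
      have hn2ne : n2 ≠ 0 := ne_of_gt h0
      have hnpos : 0 < n := by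
        rcases eq_or_lt_of_le hnn with h | h
        · exfalso; apply hn2ne; rw [← hnsq, ← h]; ring
        · exact h
      -- c ≥ (7/8) n
      have hc2 : (63/64) * n2 ≤ c ^ 2 := by
        have h1 : (63/64 : ℝ) * n2 ≤ (1 - α ^ 2 / (64 * β ^ 2)) * n2 := by
          have : α ^ 2 / (64 * β ^ 2) ≤ 1/64 := by
            rw [div_le_iff₀ (by positivity)]; nlinarith
          nlinarith
        linarith [halign]
      have hc78 : (7/8) * n ≤ c := by
        apply le_of_sq_le_sq' _ _ hpos
        nlinarith [hc2, hnsq, hn2nn]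
      -- decomposition r = (c/n2) • v + w
      set w : Fin d → ℝ := r - (c / n2) • v with hw
      have hrw : r = (c / n2) • v + w := by rw [hw]; abel
      have hww : w ⬝ᵥ w = 1 - c ^ 2 / n2 := by
        rw [hw]
        simp only [sub_dotProduct, dotProduct_sub, smul_dotProduct, dotProduct_smul,
          smul_eq_mul, hrr, ← hn2, ← hc, dotProduct_comm v r, ← hc]
        field_simp
        ring
      have hwwle : w ⬝ᵥ w ≤ α ^ 2 / (64 * β ^ 2) := by
        rw [hww, sub_le_iff_le_add]
        have h1 : (1 - α ^ 2 / (64 * β ^ 2)) ≤ c ^ 2 / n2 := by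
          rw [le_div_iff₀ h0]; linarith [halign]
        linarith
      -- s = (c/n2) * (v ⬝ᵥ Sig v) + w ⬝ᵥ Sig v
      have hsplit : s = (c / n2) * (v ⬝ᵥ Sig.mulVec v) + w ⬝ᵥ Sig.mulVec v := by
        rw [hs, hu, hsym v r]
        conv_lhs => rw [hrw]
        simp only [add_dotProduct, smul_dotProduct, smul_eq_mul]
      have hvv : α * n2 ≤ v ⬝ᵥ Sig.mulVec v := hSlow v
      have hz2 : (w ⬝ᵥ Sig.mulVec v) ^ 2 ≤ (α * n / 8) ^ 2 := by
        have h1 := dot_CS w (Sig.mulVec v)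
        have h2 := hop v
        have h3 : (w ⬝ᵥ Sig.mulVec v) ^ 2 ≤ (α ^ 2 / (64 * β ^ 2)) * (β ^ 2 * n2) := by
          calc (w ⬝ᵥ Sig.mulVec v) ^ 2 ≤ (w ⬝ᵥ w) * ((Sig.mulVec v) ⬝ᵥ (Sig.mulVec v)) := h1
            _ ≤ (α ^ 2 / (64 * β ^ 2)) * (β ^ 2 * n2) := by
                apply mul_le_mul hwwle h2 (dot_self_nonneg' _) (by positivity)
        calc (w ⬝ᵥ Sig.mulVec v) ^ 2 ≤ (α ^ 2 / (64 * β ^ 2)) * (β ^ 2 * n2) := h3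
          _ = (α * n / 8) ^ 2 := by rw [← hnsq]; field_simp; ring
      have hzlb : -(α * n / 8) ≤ w ⬝ᵥ Sig.mulVec v := by
        have := le_of_sq_le_sq' (-(w ⬝ᵥ Sig.mulVec v)) (α * n / 8) (by positivity)
          (by rw [neg_pow]; simpa using hz2)
        linarith
      have hcn : 0 ≤ c / n2 := div_nonneg hpos hn2nn
      have hterm : α * c ≤ (c / n2) * (v ⬝ᵥ Sig.mulVec v) := by
        have := mul_le_mul_of_nonneg_left hvv hcn
        calc α * c = (c / n2) * (α * n2) := by field_simp
          _ ≤ (c / n2) * (v ⬝ᵥ Sig.mulVec v) := this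
      rw [hsplit]
      have h9 := mul_le_mul_of_nonneg_left hc78 hα.le
      linarith [hterm, hzlb, h9]
  -- final arithmetic
  have hkey : α ^ 2 * σh ^ 2 * (u ⬝ᵥ u) + (1/2) * α ^ 2 * β ^ 2 * n2
      ≤ 4 * β ^ 2 * α * σh * s := by
    have h1 : 4 * β ^ 2 * α * σh * ((3/4) * α * n) ≤ 4 * β ^ 2 * α * σh * s := by
      apply mul_le_mul_of_nonneg_left hcross (by positivity)
    have h2 : 4 * β ^ 2 * α * σh * ((3/4) * α * n) = 3 * α ^ 2 * β ^ 2 * (σh * n) := by ring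
    have h3 : 3 * α ^ 2 * β ^ 2 * ((31/32) * n2) ≤ 3 * α ^ 2 * β ^ 2 * (σh * n) := by
      apply mul_le_mul_of_nonneg_left hσn (by positivity)
    have h4 : α ^ 2 * σh ^ 2 * (u ⬝ᵥ u) ≤ α ^ 2 * ((33/32) * n2) * β ^ 2 := by
      have h5 : σh ^ 2 * (u ⬝ᵥ u) ≤ ((33/32) * n2) * β ^ 2 :=
        mul_le_mul hσ2 hUβ hUnn (mul_nonneg (by norm_num) hn2nn)
      have := mul_le_mul_of_nonneg_left h5 (sq_nonneg α)
      linarith [this]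
    rw [h2] at h1
    have h6 : 0 ≤ α ^ 2 * β ^ 2 * n2 := by positivity
    linarith [h1, h3, h4, h6]
  have hfrac : (1 - α ^ 2 / (8 * β ^ 2)) * n2 - (n2 - 2 * η * s + η ^ 2 * (u ⬝ᵥ u))
      = (4 * β ^ 2 * α * σh * s - α ^ 2 * σh ^ 2 * (u ⬝ᵥ u)
          - (1/2) * α ^ 2 * β ^ 2 * n2) / (4 * β ^ 4) := by
    rw [hη]
    field_simp
    ring
  have : 0 ≤ (1 - α ^ 2 / (8 * β ^ 2)) * n2 - (n2 - 2 * η * s + η ^ 2 * (u ⬝ᵥ u)) := by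
    rw [hfrac]
    apply div_nonneg (by linarith) (by positivity)
  linarith
end

section
/- Let 0 < α ≤ β and let Σ be a symmetric d×d real matrix with αI ⪯ Σ ⪯ βI. Let θ, θ* ∈ ℝ^d and let r ∈ ℝ^d be a unit vector satisfying ⟨r, Σ(θ* − θ)⟩ ≥ 0 and ⟨r, Σ(θ* − θ)⟩² ≥ (1 − α²/(64β²))‖Σ(θ* − θ)‖². Then ⟨θ* − θ, Σ² r⟩ ≥ (α/2)‖Σ(θ* − θ)‖. -/
open Matrix

set_option maxHeartbeats 1000000

/-- The Euclidean norm of a vector in `ℝ^d`. -/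
noncomputable def eucNorm {ι : Type*} [Fintype ι] (v : ι → ℝ) : ℝ :=
  Real.sqrt (∑ i, v i ^ 2)

lemma enorm_sq {ι : Type*} [Fintype ι] (v : ι → ℝ) : eucNorm v ^ 2 = v ⬝ᵥ v := by
  rw [eucNorm, Real.sq_sqrt (Finset.sum_nonneg fun i _ => sq_nonneg _)]
  simp [dotProduct, sq]

lemma symm_dot {d : ℕ} (Sig : Matrix (Fin d) (Fin d) ℝ) (hsymm : Sigᵀ = Sig)
    (x y : Fin d → ℝ) : x ⬝ᵥ Sig.mulVec y = y ⬝ᵥ Sig.mulVec x := by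
  rw [Matrix.dotProduct_mulVec, ← Matrix.mulVec_transpose, hsymm, dotProduct_comm]

/-- Pure-arithmetic core of the argument. -/
lemma core (α β n a A B C W : ℝ) (hα : 0 < α) (hαβ : α ≤ β) (hn0 : 0 ≤ n)
    (hpos : 0 ≤ a) (halign : a ^ 2 ≥ (1 - α ^ 2 / (64 * β ^ 2)) * n ^ 2)
    (hA_low : α ≤ A) (hA_up : A ≤ β)
    (hW0 : 0 ≤ W) (hWn : W ≤ α ^ 2 / (64 * β ^ 2) * n ^ 2)
    (hC0 : 0 ≤ C) (hC : C ≤ β * W)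
    (hCS : B ^ 2 ≤ A * C) :
    a * A + B ≥ α / 2 * n := by
  have hβ : 0 < β := lt_of_lt_of_le hα hαβ
  have hc : α ^ 2 / (64 * β ^ 2) * (64 * β ^ 2) = α ^ 2 := by
    field_simp
  have hcle : α ^ 2 / (64 * β ^ 2) ≤ 1 / 64 := by
    rw [div_le_div_iff₀ (by positivity) (by norm_num)]
    nlinarith
  -- a ≥ 7/8 n
  have ha78 : 7 / 8 * n ≤ a := by
    nlinarith [sq_nonneg n, sq_nonneg (a - 7/8*n), sq_nonneg (a + 7/8*n)]
  -- B² ≤ (α/8 n)²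
  have hB2 : B ^ 2 ≤ (α / 8 * n) ^ 2 := by
    have h1 : A * C ≤ β * (β * W) := by nlinarith
    have h2 : β * (β * W) ≤ β ^ 2 * (α ^ 2 / (64 * β ^ 2) * n ^ 2) := by nlinarith
    have h3 : β ^ 2 * (α ^ 2 / (64 * β ^ 2) * n ^ 2) = (α / 8 * n) ^ 2 := by
      field_simp; ring
    linarith
  have hB : -(α / 8 * n) ≤ B := by
    nlinarith [mul_nonneg (by positivity : (0:ℝ) ≤ α / 8) hn0]
  have h4 : 7 / 8 * n * α ≤ a * A := mul_le_mul ha78 hA_low (le_of_lt hα) hpos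
  nlinarith

/-- an approximately aligned direction is a genuine descent direction. -/
theorem stmt2 (d : ℕ) (α β : ℝ) (hα : 0 < α) (hαβ : α ≤ β)
    (Sig : Matrix (Fin d) (Fin d) ℝ) (hsymm : Sigᵀ = Sig)
    (hlow : (Sig - α • (1 : Matrix (Fin d) (Fin d) ℝ)).PosSemidef)
    (hup : ((β • (1 : Matrix (Fin d) (Fin d) ℝ)) - Sig).PosSemidef)
    (θ θs r : Fin d → ℝ) (hr : eucNorm r = 1)
    (hpos : 0 ≤ r ⬝ᵥ Sig.mulVec (θs - θ))
    (halign : (r ⬝ᵥ Sig.mulVec (θs - θ)) ^ 2 ≥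
      (1 - α ^ 2 / (64 * β ^ 2)) * eucNorm (Sig.mulVec (θs - θ)) ^ 2) :
    (θs - θ) ⬝ᵥ (Sig * Sig).mulVec r ≥ (α / 2) * eucNorm (Sig.mulVec (θs - θ)) := by
  have hβ : 0 < β := lt_of_lt_of_le hα hαβ
  set u : Fin d → ℝ := Sig.mulVec (θs - θ) with hu
  set n : ℝ := eucNorm u with hn
  have hn0 : 0 ≤ n := Real.sqrt_nonneg _
  have hnsq : n ^ 2 = u ⬝ᵥ u := enorm_sq u
  have hrr : r ⬝ᵥ r = 1 := by
    have := enorm_sq r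
    rw [hr] at this; linarith
  have hq_low : ∀ v : Fin d → ℝ, α * (v ⬝ᵥ v) ≤ v ⬝ᵥ Sig.mulVec v := by
    intro v
    have h := hlow.dotProduct_mulVec_nonneg v
    simp only [Matrix.sub_mulVec, Matrix.smul_mulVec, Matrix.one_mulVec,
      dotProduct_sub, dotProduct_smul, smul_eq_mul, star_trivial] at h
    linarith
  have hq_up : ∀ v : Fin d → ℝ, v ⬝ᵥ Sig.mulVec v ≤ β * (v ⬝ᵥ v) := by
    intro v
    have h := hup.dotProduct_mulVec_nonneg v
    simp only [Matrix.sub_mulVec, Matrix.smul_mulVec, Matrix.one_mulVec,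
      dotProduct_sub, dotProduct_smul, smul_eq_mul, star_trivial] at h
    linarith
  set a : ℝ := r ⬝ᵥ u with ha
  set w : Fin d → ℝ := u - a • r with hw
  have hur : u ⬝ᵥ r = a := by rw [dotProduct_comm]
  have hww : w ⬝ᵥ w = u ⬝ᵥ u - a ^ 2 := by
    simp only [hw, dotProduct_sub, sub_dotProduct, dotProduct_smul, smul_dotProduct,
      smul_eq_mul, hur, hrr]
    ring
  have hwrs : w ⬝ᵥ Sig.mulVec r = r ⬝ᵥ Sig.mulVec w := symm_dot Sig hsymm w r
  -- Cauchy–Schwarz for the Σ-form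
  have hCS : (r ⬝ᵥ Sig.mulVec w) ^ 2 ≤ (r ⬝ᵥ Sig.mulVec r) * (w ⬝ᵥ Sig.mulVec w) := by
    have hq : ∀ t : ℝ, 0 ≤ (r ⬝ᵥ Sig.mulVec r) * (t * t)
        + (2 * (r ⬝ᵥ Sig.mulVec w)) * t + (w ⬝ᵥ Sig.mulVec w) := by
      intro t
      have h0 : α * ((t • r + w) ⬝ᵥ (t • r + w)) ≤ (t • r + w) ⬝ᵥ Sig.mulVec (t • r + w) :=
        hq_low _
      have h1 : 0 ≤ (t • r + w) ⬝ᵥ (t • r + w) := by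
        rw [← enorm_sq]; positivity
      have h2 : (t • r + w) ⬝ᵥ Sig.mulVec (t • r + w)
          = (r ⬝ᵥ Sig.mulVec r) * (t * t) + (2 * (r ⬝ᵥ Sig.mulVec w)) * t
            + (w ⬝ᵥ Sig.mulVec w) := by
        simp only [Matrix.mulVec_add, Matrix.mulVec_smul, dotProduct_add, add_dotProduct,
          dotProduct_smul, smul_dotProduct, smul_eq_mul, hwrs]
        ring
      rw [← h2]
      exact le_trans (mul_nonneg hα.le h1) h0
    have hd := discrim_le_zero hq
    rw [discrim] at hd
    nlinarith
  -- rewrite the goal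
  have hgoal : (θs - θ) ⬝ᵥ (Sig * Sig).mulVec r = r ⬝ᵥ Sig.mulVec u := by
    rw [← Matrix.mulVec_mulVec, symm_dot Sig hsymm (θs - θ) (Sig.mulVec r), ← hu,
      dotProduct_comm, symm_dot Sig hsymm u r]
  have hdecomp : r ⬝ᵥ Sig.mulVec u = a * (r ⬝ᵥ Sig.mulVec r) + r ⬝ᵥ Sig.mulVec w := by
    have huw : u = a • r + w := by simp [hw]
    nth_rewrite 1 [huw]
    rw [Matrix.mulVec_add, Matrix.mulVec_smul, dotProduct_add, dotProduct_smul, smul_eq_mul]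
  rw [hgoal, hdecomp]
  have hW0 : 0 ≤ w ⬝ᵥ w := by rw [← enorm_sq]; positivity
  have hWn : w ⬝ᵥ w ≤ α ^ 2 / (64 * β ^ 2) * n ^ 2 := by
    rw [hww, ← hnsq]; nlinarith [halign]
  have hC0 : 0 ≤ w ⬝ᵥ Sig.mulVec w :=
    le_trans (mul_nonneg hα.le hW0) (hq_low w)
  have hA_low : α ≤ r ⬝ᵥ Sig.mulVec r := by have := hq_low r; rw [hrr] at this; linarith
  have hA_up : r ⬝ᵥ Sig.mulVec r ≤ β := by have := hq_up r; rw [hrr] at this; linarith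
  exact core α β n a _ _ _ _ hα hαβ hn0 hpos halign hA_low hA_up hW0 hWn hC0 (hq_up w) hCS
end
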